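/- arXiv:2003.13477 — 2 statements merged into one kernel-verified Lean document; each statement's English description precedes it below -/
import Mathlib

section
/- Let $\{T(t) : t \ge 0\}$ be an almost surely uniformly bounded $C_0$-semigroup on a complete $RN$ module $S$ with infinitesimal generator $(A, D(A))$. Then for every $x \in D(A)$, the supremum $\bigvee_{t>0} \|(T(t)x - x)/t\|$ belongs to $L^0_+(\mathcal{F})$. -/
/- Preamble: random normed modules over `L⁰(𝓕,K)`, the `(ε,λ)`-topology,
`C₀`-semigroups of continuous module homomorphisms and resolvents. -/

open MeasureTheory MeasureTheory.AEEqFun Filter Set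
noncomputable section

namespace MeasureTheory.AEEqFun
variable {α : Type*} [MeasurableSpace α] {μ : Measure α}
variable {γ : Type*} [TopologicalSpace γ] [CommRing γ] [IsTopologicalRing γ]

noncomputable instance instNatCast' : NatCast (α →ₘ[μ] γ) := ⟨fun n => const α (n : γ)⟩
noncomputable instance instIntCast' : IntCast (α →ₘ[μ] γ) := ⟨fun n => const α (n : γ)⟩

/-- `L⁰(𝓕,K)` is a commutative ring under the pointwise operations. -/
noncomputable instance instCommRing' : CommRing (α →ₘ[μ] γ) :=
  toGerm_injective.commRing toGerm zero_toGerm one_toGerm add_toGerm mul_toGerm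
    neg_toGerm sub_toGerm (fun n x => smul_toGerm n x) (fun n x => smul_toGerm n x)
    pow_toGerm (fun _ => rfl) (fun _ => rfl)
end MeasureTheory.AEEqFun

namespace RNTheory

variable {Ω : Type*} [MeasurableSpace Ω] {μ : Measure Ω}

/-- The pointwise absolute value `|ξ| ∈ L⁰₊(𝓕)` of `ξ ∈ L⁰(𝓕,K)`. -/
def l0abs {K : Type*} [RCLike K] (ξ : Ω →ₘ[μ] K) : Ω →ₘ[μ] ℝ :=
  ξ.comp (fun a => ‖a‖) continuous_norm

/-- Pointwise exponential on `L⁰(𝓕,ℝ)`. -/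
def l0exp (ξ : Ω →ₘ[μ] ℝ) : Ω →ₘ[μ] ℝ := ξ.comp Real.exp Real.continuous_exp

/-- Pointwise real part on `L⁰(𝓕,ℂ)`. -/
def l0re (ξ : Ω →ₘ[μ] ℂ) : Ω →ₘ[μ] ℝ := ξ.comp Complex.re Complex.continuous_re

/-- The embedding of `L⁰(𝓕,ℝ)` into `L⁰(𝓕,K)`. -/
def l0ofReal (K : Type*) [RCLike K] (ξ : Ω →ₘ[μ] ℝ) : Ω →ₘ[μ] K :=
  ξ.comp (fun r => (RCLike.ofReal r : K)) RCLike.continuous_ofReal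

/-- The constant element of `L⁰(𝓕,K)` given by the real number `t`. -/
def rconst (K : Type*) [RCLike K] (μ : Measure Ω) (t : ℝ) : Ω →ₘ[μ] K :=
  AEEqFun.const Ω ((RCLike.ofReal t : K))

/-- `ξ ∈ L⁰₊₊(𝓕)`, i.e. `ξ > 0` on `Ω`. -/
def L0pos (ξ : Ω →ₘ[μ] ℝ) : Prop := ∀ᵐ ω ∂μ, 0 < ξ ω

section Top

variable {S : Type*} [AddCommGroup S]

/-- The `(ε,λ)`-neighborhood of `x₀`: all `y` with `P(‖y - x₀‖ < ε) > 1 - λ`. -/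
def Nset (nrm : S → Ω →ₘ[μ] ℝ) (x₀ : S) (ε lam : ℝ) : Set S :=
  {y | 1 - lam < (μ {ω | nrm (y - x₀) ω < ε}).toReal}

theorem Nset_mono [IsFiniteMeasure μ] (nrm : S → Ω →ₘ[μ] ℝ) (x₀ : S) {ε₁ ε₂ lam₁ lam₂ : ℝ}
    (hε : ε₁ ≤ ε₂) (hlam : lam₁ ≤ lam₂) : Nset nrm x₀ ε₁ lam₁ ⊆ Nset nrm x₀ ε₂ lam₂ := by
  intro y hy
  have h1 : (μ {ω | nrm (y - x₀) ω < ε₁}).toReal ≤ (μ {ω | nrm (y - x₀) ω < ε₂}).toReal :=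
    ENNReal.toReal_mono (measure_ne_top μ _) (measure_mono (fun ω h => lt_of_lt_of_le h hε))
  exact lt_of_le_of_lt (by linarith) (lt_of_lt_of_le hy h1)

/-- The `(ε,λ)`-topology on an `RN` module. -/
def elTop [IsFiniteMeasure μ] (nrm : S → Ω →ₘ[μ] ℝ) : TopologicalSpace S where
  IsOpen U := ∀ x ∈ U, ∃ ε > (0:ℝ), ∃ lam : ℝ, 0 < lam ∧ lam < 1 ∧ Nset nrm x ε lam ⊆ U
  isOpen_univ := fun _ _ => ⟨1, one_pos, 1/2, by norm_num, by norm_num, fun _ _ => trivial⟩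
  isOpen_inter := by
    intro U V hU hV x hx
    obtain ⟨ε₁, hε₁, l₁, hl₁, hl₁', hN₁⟩ := hU x hx.1
    obtain ⟨ε₂, hε₂, l₂, hl₂, hl₂', hN₂⟩ := hV x hx.2
    refine ⟨min ε₁ ε₂, lt_min hε₁ hε₂, min l₁ l₂, lt_min hl₁ hl₂,
      lt_of_le_of_lt (min_le_left _ _) hl₁', fun y hy => ⟨?_, ?_⟩⟩
    · exact hN₁ (Nset_mono nrm x (min_le_left _ _) (min_le_left _ _) hy)
    · exact hN₂ (Nset_mono nrm x (min_le_right _ _) (min_le_right _ _) hy)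
  isOpen_sUnion := by
    intro s hs x hx
    obtain ⟨U, hUs, hxU⟩ := hx
    obtain ⟨ε, hε, lam, h1, h2, hN⟩ := hs U hUs x hxU
    exact ⟨ε, hε, lam, h1, h2, fun y hy => ⟨U, hUs, hN hy⟩⟩

/-- A sequence in an `RN` module is Cauchy (in probability). -/
def IsCauchyRN (nrm : S → Ω →ₘ[μ] ℝ) (x : ℕ → S) : Prop :=
  ∀ ε : ℝ, 0 < ε → ∃ N : ℕ, ∀ m ≥ N, ∀ n ≥ N,
    (μ {ω | ε ≤ nrm (x m - x n) ω}).toReal < ε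

/-- The `RN` module `S` is complete: every Cauchy sequence converges in the
`(ε,λ)`-topology. -/
def IsCompleteRN [IsFiniteMeasure μ] (nrm : S → Ω →ₘ[μ] ℝ) : Prop :=
  ∀ x : ℕ → S, IsCauchyRN nrm x → ∃ y, Tendsto x atTop (@nhds S (elTop nrm) y)

end Top

section RNModule

variable (K : Type*) [RCLike K] {S : Type*} [AddCommGroup S] [Module (Ω →ₘ[μ] K) S]

/-- `(S, nrm)` is a random normed module (`RN` module) over `K` with base `(Ω,𝓕,P)`. -/
structure IsRNNorm (nrm : S → Ω →ₘ[μ] ℝ) : Prop where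
  nonneg : ∀ x, 0 ≤ nrm x
  smul_eq : ∀ (ξ : Ω →ₘ[μ] K) (x : S), nrm (ξ • x) = l0abs ξ * nrm x
  add_le : ∀ x y, nrm (x + y) ≤ nrm x + nrm y
  definite : ∀ x, nrm x = 0 → x = 0

section Semigroup
variable [IsFiniteMeasure μ]

/-- A family `{T t : t ≥ 0}` of continuous module homomorphisms (equivalently, of a.s. bounded
module homomorphisms) forming a `C₀`-semigroup on the `RN` module `S`. -/
structure IsC0Semigroup (nrm : S → Ω →ₘ[μ] ℝ) (T : ℝ → S →ₗ[Ω →ₘ[μ] K] S) : Prop where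
  bounded : ∀ t, 0 ≤ t → ∃ ξ : Ω →ₘ[μ] ℝ, 0 ≤ ξ ∧ ∀ x, nrm (T t x) ≤ ξ * nrm x
  id_eq : T 0 = LinearMap.id
  comp_eq : ∀ s t, 0 ≤ s → 0 ≤ t → T (s + t) = (T s).comp (T t)
  strong_cont : ∀ x : S, Tendsto (fun t => T t x) (nhdsWithin 0 (Ioi 0)) (@nhds S (elTop nrm) x)

/-- The `C₀`-semigroup `T` is a.s. bounded: `⋁_{t ∈ [0,L]} ‖T(t)‖ ∈ L⁰₊` for some `L > 0`. -/
def IsASBounded (nrm : S → Ω →ₘ[μ] ℝ) (T : ℝ → S →ₗ[Ω →ₘ[μ] K] S) : Prop :=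
  ∃ L : ℝ, 0 < L ∧ ∃ ξ : Ω →ₘ[μ] ℝ, 0 ≤ ξ ∧ ∀ t ∈ Icc 0 L, ∀ x, nrm (T t x) ≤ ξ * nrm x

/-- `GenRel nrm T x y` says `x ∈ D(A)` and `y = A x`, where `(A, D(A))` is the infinitesimal
generator of the semigroup `T`: `y = lim_{t ↓ 0} (T(t)x - x)/t` in the `(ε,λ)`-topology. -/
def GenRel (nrm : S → Ω →ₘ[μ] ℝ) (T : ℝ → S →ₗ[Ω →ₘ[μ] K] S) (x y : S) : Prop :=
  Tendsto (fun t : ℝ => rconst K μ t⁻¹ • (T t x - x)) (nhdsWithin 0 (Ioi 0))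
    (@nhds S (elTop nrm) y)

end Semigroup

/-- `R` is the resolvent `R(ξ,A) = (ξI - A)⁻¹ ∈ B(S)` of the module homomorphism
`A : D(A) → S`, i.e. `ξ ∈ ρ(A)`. -/
structure IsResolvent (nrm : S → Ω →ₘ[μ] ℝ) (p : Submodule (Ω →ₘ[μ] K) S)
    (A : p →ₗ[Ω →ₘ[μ] K] S) (ξ : Ω →ₘ[μ] K) (R : S →ₗ[Ω →ₘ[μ] K] S) : Prop where
  mem : ∀ x : S, R x ∈ p
  right_inv : ∀ x : S, ξ • R x - A ⟨R x, mem x⟩ = x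
  left_inv : ∀ y : p, R (ξ • (y : S) - A y) = (y : S)
  bounded : ∃ c : Ω →ₘ[μ] ℝ, 0 ≤ c ∧ ∀ x, nrm (R x) ≤ c * nrm x

end RNModule

end RNTheory

/-!
Splitting `[0, t]` into `n` equal steps, the semigroup law writes `(T(t)x - x)/t` as the
average of the `T(kt/n)`, `k < n`, applied to the difference quotient at `t/n`; hence
`‖(T(t)x - x)/t‖ ≤ ξ ‖(T(t/n)x - x)/(t/n)‖` for the a.s. bound `ξ` of the semigroup.
As `n → ∞` the quotients at `t/n` converge to `Ax` in the `(ε,λ)`-topology, i.e. in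
probability, so along an a.s. convergent subsequence `‖(T(t)x - x)/t‖ ≤ ξ ‖Ax‖` a.s.
-/

open Topology

namespace RNTheory

variable {Ω : Type*} [MeasurableSpace Ω] {μ : Measure Ω}

theorem ae_le_mul_of_ae_le_mul_add_of_tendstoInMeasure {f a b : Ω → ℝ} {g : ℕ → Ω → ℝ}
    (hg : TendstoInMeasure μ g atTop 0) (hle : ∀ n, ∀ᵐ ω ∂μ, f ω ≤ a ω * (g n ω + b ω)) :
    ∀ᵐ ω ∂μ, f ω ≤ a ω * b ω := by
  obtain ⟨ns, -, hns⟩ := hg.exists_seq_tendsto_ae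
  filter_upwards [hns, ae_all_iff.2 hle] with ω hω hleω
  have hlim : Tendsto (fun k => a ω * (g (ns k) ω + b ω)) atTop (𝓝 (a ω * (0 + b ω))) :=
    (hω.add_const _).const_mul _
  rw [zero_add] at hlim
  exact ge_of_tendsto' hlim fun k => hleω (ns k)

theorem ae_nonneg_of_nonneg {f : Ω →ₘ[μ] ℝ} (hf : 0 ≤ f) : ∀ᵐ ω ∂μ, 0 ≤ f ω := by
  filter_upwards [AEEqFun.coeFn_le.2 hf, AEEqFun.coeFn_zero (μ := μ) (β := ℝ)] with ω hle h0
  rwa [h0] at hle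

theorem rconst_mul (K : Type*) [RCLike K] (a b : ℝ) :
    rconst K μ a * rconst K μ b = rconst K μ (a * b) := by
  simp only [rconst, AEEqFun.const, AEEqFun.mk_mul_mk, AEEqFun.mk_eq_mk, RCLike.ofReal_mul]
  rfl

theorem l0abs_rconst (K : Type*) [RCLike K] (r : ℝ) :
    l0abs (rconst K μ r) = AEEqFun.const Ω |r| := by
  simp only [l0abs, rconst, AEEqFun.const, AEEqFun.comp_mk, AEEqFun.mk_eq_mk]
  exact Eventually.of_forall fun _ => RCLike.norm_ofReal r

theorem l0abs_zero {K : Type*} [RCLike K] : l0abs (0 : Ω →ₘ[μ] K) = 0 := by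
  simp only [l0abs, AEEqFun.zero_def, AEEqFun.comp_mk, AEEqFun.mk_eq_mk]
  exact Eventually.of_forall fun _ => norm_zero

section RNModule

variable {K : Type*} [RCLike K] {S : Type*} [AddCommGroup S] [Module (Ω →ₘ[μ] K) S]
  {nrm : S → Ω →ₘ[μ] ℝ}

theorem mem_Nset_iff [IsProbabilityMeasure μ] {x₀ y : S} {ε lam : ℝ} :
    y ∈ Nset nrm x₀ ε lam ↔ μ.real {ω | ε ≤ nrm (y - x₀) ω} < lam := by
  have hmeas : MeasurableSet {ω | nrm (y - x₀) ω < ε} :=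
    measurableSet_lt (nrm (y - x₀)).measurable measurable_const
  have hcompl : {ω | ε ≤ nrm (y - x₀) ω} = {ω | nrm (y - x₀) ω < ε}ᶜ := by
    ext; simp
  show 1 - lam < μ.real {ω | nrm (y - x₀) ω < ε} ↔ _
  rw [hcompl, probReal_compl_eq_one_sub hmeas]
  constructor <;> intro <;> linarith

def diffQuot (T : ℝ → S →ₗ[Ω →ₘ[μ] K] S) (t : ℝ) (x : S) : S :=
  rconst K μ t⁻¹ • (T t x - x)

namespace IsC0Semigroup

variable [IsFiniteMeasure μ] {T : ℝ → S →ₗ[Ω →ₘ[μ] K] S} (hT : IsC0Semigroup K nrm T)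
include hT

theorem sum_range_apply_sub {s : ℝ} (hs : 0 ≤ s) (x : S) (n : ℕ) :
    ∑ k ∈ Finset.range n, (T (k * s) (T s x) - T (k * s) x) = T (n * s) x - x := by
  have hstep (k : ℕ) : T (k * s) (T s x) = T ((k + 1 : ℕ) * s) x := by
    rw [Nat.cast_succ, add_one_mul, hT.comp_eq _ _ (by positivity) hs, LinearMap.comp_apply]
  simp_rw [hstep]
  rw [Finset.sum_range_sub (fun k : ℕ => T (k * s) x), Nat.cast_zero, zero_mul, hT.id_eq,
    LinearMap.id_apply]

theorem diffQuot_eq_smul_sum {t : ℝ} (ht : 0 ≤ t) {n : ℕ} (hn : n ≠ 0) (x : S) :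
    diffQuot T t x =
      rconst K μ (n : ℝ)⁻¹ • ∑ k ∈ Finset.range n, T (k * (t / n)) (diffQuot T (t / n) x) := by
  have hn' : (n : ℝ) ≠ 0 := Nat.cast_ne_zero.2 hn
  simp only [diffQuot, map_smul, map_sub, ← Finset.smul_sum]
  rw [hT.sum_range_apply_sub (by positivity), mul_div_cancel₀ t hn', smul_smul, rconst_mul,
    inv_div, div_eq_mul_inv, ← mul_assoc, inv_mul_cancel₀ hn', one_mul]

end IsC0Semigroup

namespace IsRNNorm

variable (h : IsRNNorm K nrm)
include h

theorem map_zero : nrm 0 = 0 := by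
  simpa [l0abs_zero] using h.smul_eq 0 0

theorem ae_nonneg (x : S) : ∀ᵐ ω ∂μ, 0 ≤ nrm x ω :=
  ae_nonneg_of_nonneg (h.nonneg x)

theorem ae_add_le (x y : S) : ∀ᵐ ω ∂μ, nrm (x + y) ω ≤ nrm x ω + nrm y ω := by
  filter_upwards [AEEqFun.coeFn_le.2 (h.add_le x y), AEEqFun.coeFn_add (nrm x) (nrm y)]
    with ω hle hadd
  rwa [hadd] at hle

theorem ae_sum_le {ι : Type*} (s : Finset ι) (v : ι → S) :
    ∀ᵐ ω ∂μ, nrm (∑ i ∈ s, v i) ω ≤ ∑ i ∈ s, nrm (v i) ω := by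
  induction s using Finset.cons_induction with
  | empty =>
    filter_upwards [AEEqFun.coeFn_zero (μ := μ) (β := ℝ)] with ω h0
    simp [h.map_zero, h0]
  | cons i s hi ih =>
    filter_upwards [ih, h.ae_add_le (v i) (∑ j ∈ s, v j)] with ω hs hadd
    rw [Finset.sum_cons, Finset.sum_cons]
    linarith

theorem ae_rconst_smul (r : ℝ) (x : S) :
    ∀ᵐ ω ∂μ, nrm (rconst K μ r • x) ω = |r| * nrm x ω := by
  rw [h.smul_eq, l0abs_rconst]
  filter_upwards [AEEqFun.coeFn_mul (AEEqFun.const Ω |r|) (nrm x),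
    AEEqFun.coeFn_const (μ := μ) Ω |r|] with ω hmul hconst
  rw [hmul, Pi.mul_apply, hconst, Function.const_apply]

theorem ae_diffQuot_le [IsFiniteMeasure μ] {T : ℝ → S →ₗ[Ω →ₘ[μ] K] S}
    (hT : IsC0Semigroup K nrm T) {ξ : Ω →ₘ[μ] ℝ}
    (hξ : ∀ t, 0 ≤ t → ∀ x, nrm (T t x) ≤ ξ * nrm x) {t : ℝ} (ht : 0 ≤ t) {n : ℕ} (hn : n ≠ 0)
    (x : S) : ∀ᵐ ω ∂μ, nrm (diffQuot T t x) ω ≤ ξ ω * nrm (diffQuot T (t / n) x) ω := by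
  rw [hT.diffQuot_eq_smul_sum ht hn]
  set u := diffQuot T (t / n) x
  have hbound : ∀ᵐ ω ∂μ, ∀ k : ℕ, nrm (T (k * (t / n)) u) ω ≤ ξ ω * nrm u ω :=
    ae_all_iff.2 fun k => by
      filter_upwards [AEEqFun.coeFn_le.2 (hξ (k * (t / n)) (by positivity) u),
        AEEqFun.coeFn_mul ξ (nrm u)] with ω hle hmul
      rwa [hmul] at hle
  filter_upwards [h.ae_rconst_smul (n : ℝ)⁻¹ _, h.ae_sum_le (Finset.range n) _, hbound]
    with ω hsmul hsum hk
  rw [hsmul, abs_of_nonneg (by positivity)]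
  calc (n : ℝ)⁻¹ * nrm (∑ k ∈ Finset.range n, T (k * (t / n)) u) ω
      ≤ (n : ℝ)⁻¹ * ∑ _k ∈ Finset.range n, ξ ω * nrm u ω := by
        gcongr
        exact hsum.trans (Finset.sum_le_sum fun k _ => hk k)
    _ = ξ ω * nrm u ω := by
        rw [Finset.sum_const, Finset.card_range, nsmul_eq_mul, ← mul_assoc,
          inv_mul_cancel₀ (Nat.cast_ne_zero.2 hn), one_mul]

variable [IsProbabilityMeasure μ]

theorem mem_Nset_add {y z₀ z : S} {ε₁ ε₂ lam₁ lam₂ : ℝ}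
    (hz₀ : z₀ ∈ Nset nrm y ε₁ lam₁) (hz : z ∈ Nset nrm z₀ ε₂ lam₂) :
    z ∈ Nset nrm y (ε₁ + ε₂) (lam₁ + lam₂) := by
  rw [mem_Nset_iff] at hz₀ hz ⊢
  have hsub : ∀ᵐ ω ∂μ, ε₁ + ε₂ ≤ nrm (z - y) ω →
      ε₁ ≤ nrm (z₀ - y) ω ∨ ε₂ ≤ nrm (z - z₀) ω := by
    filter_upwards [h.ae_add_le (z - z₀) (z₀ - y)] with ω htri hω
    rw [sub_add_sub_cancel] at htri
    by_contra! hcon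
    linarith
  calc μ.real {ω | ε₁ + ε₂ ≤ nrm (z - y) ω}
      ≤ μ.real ({ω | ε₁ ≤ nrm (z₀ - y) ω} ∪ {ω | ε₂ ≤ nrm (z - z₀) ω}) :=
        ENNReal.toReal_mono (measure_ne_top _ _) (measure_mono_ae hsub)
    _ ≤ μ.real {ω | ε₁ ≤ nrm (z₀ - y) ω} + μ.real {ω | ε₂ ≤ nrm (z - z₀) ω} :=
        measureReal_union_le _ _
    _ < lam₁ + lam₂ := add_lt_add hz₀ hz

theorem Nset_mem_nhds (y : S) {ε lam : ℝ} (hε : 0 < ε) (hlam : 0 < lam) :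
    Nset nrm y ε lam ∈ @nhds S (elTop nrm) y := by
  let _ : TopologicalSpace S := elTop nrm
  rw [mem_nhds_iff]
  refine ⟨{z | ∃ ε' lam', 0 < ε' ∧ ε' < ε ∧ 0 < lam' ∧ lam' < lam ∧ z ∈ Nset nrm y ε' lam'},
    ?_, ?_, ?_⟩
  · rintro z ⟨ε', lam', -, hε', -, hlam', hz⟩
    exact Nset_mono nrm y hε'.le hlam'.le hz
  · rintro z₀ ⟨ε', lam', hε'0, hε', hlam'0, hlam', hz₀⟩
    -- the defining neighbourhoods of `elTop` have `λ < 1`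
    have hmin := min_le_left ((lam - lam') / 2) (1 / 2)
    refine ⟨(ε - ε') / 2, by linarith, min ((lam - lam') / 2) (1 / 2),
      lt_min (by linarith) (by norm_num), (min_le_right _ _).trans_lt (by norm_num),
      fun z hz => ⟨_, _, by linarith, by linarith, by positivity, by linarith,
        h.mem_Nset_add hz₀ hz⟩⟩
  · refine ⟨ε / 2, lam / 2, by linarith, by linarith, by linarith, by linarith, ?_⟩
    have hnull : μ {ω | ε / 2 ≤ nrm (y - y) ω} = 0 := by
      rw [measure_eq_zero_iff_ae_notMem, sub_self, h.map_zero]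
      filter_upwards [AEEqFun.coeFn_zero (μ := μ) (β := ℝ)] with ω h0
      simp [h0, hε]
    rw [mem_Nset_iff, measureReal_def, hnull, ENNReal.toReal_zero]
    linarith

theorem tendstoInMeasure_of_tendsto {ι : Type*} {l : Filter ι} {u : ι → S} {y : S}
    (hu : Tendsto u l (@nhds S (elTop nrm) y)) :
    TendstoInMeasure μ (fun i => ⇑(nrm (u i - y))) l 0 := by
  rw [tendstoInMeasure_iff_measureReal_dist]
  intro ε hε
  refine tendsto_order.2 ⟨fun a ha => Eventually.of_forall fun i => ha.trans_le measureReal_nonneg,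
    fun lam hlam => ?_⟩
  filter_upwards [hu (h.Nset_mem_nhds y hε hlam)] with i hi
  have hdist : {ω | ε ≤ dist (nrm (u i - y) ω) ((0 : Ω → ℝ) ω)}
      =ᵐ[μ] {ω | ε ≤ nrm (u i - y) ω} := by
    rw [eventuallyEq_set]
    filter_upwards [h.ae_nonneg (u i - y)] with ω h0
    rw [Pi.zero_apply, Real.dist_0_eq_abs, abs_of_nonneg h0]
  rw [measureReal_congr hdist]
  exact mem_Nset_iff.1 hi

end IsRNNorm

end RNModule

end RNTheory

open RNTheory

theorem asu_bounded_semigroup_difference_quotients_bounded_general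
    {Ω : Type*} [MeasurableSpace Ω] (μ : Measure Ω) [IsProbabilityMeasure μ]
    (K : Type*) [RCLike K] {S : Type*} [AddCommGroup S] [Module (Ω →ₘ[μ] K) S]
    (nrm : S → Ω →ₘ[μ] ℝ) (h : IsRNNorm K nrm)
    (T : ℝ → S →ₗ[Ω →ₘ[μ] K] S) (hT : IsC0Semigroup K nrm T)
    (hasu : ∃ ξ : Ω →ₘ[μ] ℝ, 0 ≤ ξ ∧ ∀ t, 0 ≤ t → ∀ x, nrm (T t x) ≤ ξ * nrm x) :
    ∀ x y, GenRel K nrm T x y →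
      ∃ η : Ω →ₘ[μ] ℝ, 0 ≤ η ∧ ∀ t : ℝ, 0 < t →
        nrm (rconst K μ t⁻¹ • (T t x - x)) ≤ η := by
  intro x y hxy
  obtain ⟨ξ, hξ0, hξ⟩ := hasu
  have hξ_ae := ae_nonneg_of_nonneg hξ0
  have hη : ∀ᵐ ω ∂μ, (ξ * nrm y) ω = ξ ω * nrm y ω := AEEqFun.coeFn_mul ξ (nrm y)
  refine ⟨ξ * nrm y, AEEqFun.coeFn_le.1 ?_, fun t ht => AEEqFun.coeFn_le.1 ?_⟩
  · filter_upwards [hη, hξ_ae, h.ae_nonneg y, AEEqFun.coeFn_zero (μ := μ) (β := ℝ)]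
      with ω hη hξ hy h0
    rw [hη, h0]
    exact mul_nonneg hξ hy
  have hsteps : Tendsto (fun n : ℕ => t / (n + 1 : ℕ)) atTop (𝓝[>] 0) :=
    tendsto_nhdsWithin_of_tendsto_nhds_of_eventually_within _
      ((tendsto_const_div_atTop_nhds_zero_nat t).comp (tendsto_add_atTop_nat 1))
      (Eventually.of_forall fun n => div_pos ht (by positivity))
  have hbound (n : ℕ) : ∀ᵐ ω ∂μ, nrm (diffQuot T t x) ω
      ≤ ξ ω * (nrm (diffQuot T (t / (n + 1 : ℕ)) x - y) ω + nrm y ω) := by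
    filter_upwards [h.ae_diffQuot_le hT hξ ht.le n.succ_ne_zero x,
      h.ae_add_le (diffQuot T (t / (n + 1 : ℕ)) x - y) y, hξ_ae] with ω hq htri hξ
    rw [sub_add_cancel] at htri
    exact hq.trans (mul_le_mul_of_nonneg_left htri hξ)
  have hlim := h.tendstoInMeasure_of_tendsto (hxy.comp hsteps)
  filter_upwards [ae_le_mul_of_ae_le_mul_add_of_tendstoInMeasure hlim hbound, hη]
    with ω hle hη
  rwa [hη]

/-- Let `{T(t) : t ≥ 0}` be an a.s. uniformly bounded `C₀`-semigroup on a
complete `RN` module `S` with infinitesimal generator `(A, D(A))`. Then for every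
`x ∈ D(A)`, `⋁_{t > 0} ‖(T(t)x - x)/t‖ ∈ L⁰₊(𝓕)`. -/
theorem asu_bounded_semigroup_difference_quotients_bounded
    {Ω : Type*} [MeasurableSpace Ω] (μ : Measure Ω) [IsProbabilityMeasure μ]
    (K : Type*) [RCLike K] {S : Type*} [AddCommGroup S] [Module (Ω →ₘ[μ] K) S]
    (nrm : S → Ω →ₘ[μ] ℝ) (h : IsRNNorm K nrm) (hcomplete : IsCompleteRN nrm)
    (T : ℝ → S →ₗ[Ω →ₘ[μ] K] S) (hT : IsC0Semigroup K nrm T)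
    (hasu : ∃ ξ : Ω →ₘ[μ] ℝ, 0 ≤ ξ ∧ ∀ t, 0 ≤ t → ∀ x, nrm (T t x) ≤ ξ * nrm x) :
    ∀ x y, GenRel K nrm T x y →
      ∃ η : Ω →ₘ[μ] ℝ, 0 ≤ η ∧ ∀ t : ℝ, 0 < t →
        nrm (rconst K μ t⁻¹ • (T t x - x)) ≤ η :=
  asu_bounded_semigroup_difference_quotients_bounded_general μ K nrm h T hT hasu
end
end

section
/- Define $f : [0,1] \to L^0(\mathfrak{B}[0,1], R)$ (with Lebesgue measure) by $f(t) = $ the equivalence class of the indicator $I_{(t,1]}$. Then $f$ is differentiable on $[0,1]$ in the $(\varepsilon,\lambda)$-topology with $f'(t) = 0$ for all $t$, yet $f(1) - f(0) = -1 \ne 0 = \int_0^1 f'(t)\,dt$; in particular the fundamental theorem of calculus fails for this non-$L^0$-Lipschitz function. -/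
/- Preamble: random normed modules over `L⁰(𝓕,K)`, the `(ε,λ)`-topology,
`C₀`-semigroups of continuous module homomorphisms and resolvents. -/

open MeasureTheory MeasureTheory.AEEqFun Filter Set
noncomputable section

open RNTheory

namespace Example316

/-- Lebesgue measure restricted to `[0,1]`, as the base probability space. -/
def μ01 : Measure ℝ := volume.restrict (Icc (0:ℝ) 1)

instance : IsProbabilityMeasure μ01 := ⟨by simp [μ01, Real.volume_Icc]⟩

/-- `f(t)` is the equivalence class of the indicator `I_{(t,1]}` in `L⁰(𝔅[0,1],ℝ)`. -/
def f (t : ℝ) : ℝ →ₘ[μ01] ℝ :=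
  AEEqFun.mk (Set.indicator (Ioc t 1) (fun _ => (1:ℝ)))
    ((measurable_const.indicator measurableSet_Ioc).aestronglyMeasurable)

end Example316

/-! The difference quotient `(f s - f t)/(s - t)` vanishes outside the interval between `s` and
`t`, whatever the size of the factor `(s - t)⁻¹`. Since that interval has measure `|s - t|`, the
quotient tends to `0` in probability, i.e. in the `(ε,λ)`-topology. On the other hand
`f 1 - f 0 = 0 - 1` almost everywhere on `[0,1]`. -/

open scoped Topology Interval

theorem MeasureTheory.AEEqFun.const_ne_zero {α β : Type*} [MeasurableSpace α] {μ : Measure α}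
    [NeZero μ] [TopologicalSpace β] [Zero β] {b : β} (hb : b ≠ 0) :
    AEEqFun.const α b ≠ (0 : α →ₘ[μ] β) := by
  obtain ⟨a⟩ := Measure.nonempty_of_neZero μ
  intro h
  simpa [hb] using congrArg (fun g : α →ₘ[μ] β => g a) h

namespace RNTheory

variable {Ω : Type*} [MeasurableSpace Ω] {μ : Measure Ω} {β : Type*} {l : Filter β}

theorem coeFn_l0abs {K : Type*} [RCLike K] (ξ : Ω →ₘ[μ] K) :
    ⇑(l0abs ξ) =ᵐ[μ] fun ω => ‖ξ ω‖ :=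
  AEEqFun.coeFn_comp _ _ _

variable [IsProbabilityMeasure μ]

theorem tendsto_elTop_of_tendsto_measure {S : Type*} [AddCommGroup S] {nrm : S → Ω →ₘ[μ] ℝ}
    {x : β → S} {x₀ : S}
    (h : ∀ ε > 0, Tendsto (fun b => μ {ω | ε ≤ nrm (x b - x₀) ω}) l (𝓝 0)) :
    Tendsto x l (@nhds S (elTop nrm) x₀) := by
  let := elTop nrm
  refine tendsto_nhds.2 fun U hU hx₀ => ?_
  obtain ⟨ε, hε, lam, hlam, -, hN⟩ := hU x₀ hx₀
  filter_upwards [(h ε hε).eventually (gt_mem_nhds (ENNReal.ofReal_pos.2 hlam))] with b hb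
  refine hN ?_
  have hfar : μ.real {ω | ε ≤ nrm (x b - x₀) ω} < lam := ENNReal.toReal_lt_of_lt_ofReal hb
  have hcover : 1 ≤ μ.real {ω | nrm (x b - x₀) ω < ε} + μ.real {ω | ε ≤ nrm (x b - x₀) ω} := by
    calc 1 = μ.real (univ : Set Ω) := probReal_univ.symm
      _ = μ.real ({ω | nrm (x b - x₀) ω < ε} ∪ {ω | ε ≤ nrm (x b - x₀) ω}) := by
        congr 1; ext ω; simp [lt_or_ge]
      _ ≤ _ := measureReal_union_le _ _
  change 1 - lam < μ.real _
  linarith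

theorem tendsto_elTop_l0abs_zero_of_ae_eq_zero_off {K : Type*} [RCLike K] {x : β → Ω →ₘ[μ] K}
    {D : β → Set Ω} (hD : Tendsto (fun b => μ (D b)) l (𝓝 0))
    (hx : ∀ b, ∀ᵐ ω ∂μ, ω ∉ D b → x b ω = 0) :
    Tendsto x l (@nhds _ (elTop l0abs) 0) := by
  refine tendsto_elTop_of_tendsto_measure fun ε hε =>
    tendsto_of_tendsto_of_tendsto_of_le_of_le tendsto_const_nhds hD (fun _ => zero_le)
      fun b => measure_mono_ae ?_
  filter_upwards [hx b, coeFn_l0abs (x b - 0)] with ω hzero habs (hfar : ε ≤ l0abs (x b - 0) ω)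
  by_contra hω
  rw [sub_zero] at habs hfar
  rw [habs, hzero hω, norm_zero] at hfar
  exact hε.not_ge hfar

end RNTheory

theorem Set.indicator_Ioc_eq_of_notMem_uIoc {α M : Type*} [LinearOrder α] [Zero M] {s t b ω : α}
    (g : α → M) (hω : ω ∉ Ι s t) : (Ioc s b).indicator g ω = (Ioc t b).indicator g ω := by
  rcases notMem_uIoc.1 hω with ⟨hs, ht⟩ | ⟨ht, hs⟩
  · simp [indicator, hs.not_gt, ht.not_gt]
  · simp [indicator, hs, ht]

theorem Real.tendsto_volume_uIoc (t : ℝ) : Tendsto (fun s => volume (Ι s t)) (𝓝 t) (𝓝 0) := by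
  have h : Tendsto (fun s => ENNReal.ofReal |t - s|) (𝓝 t) (𝓝 (ENNReal.ofReal |t - t|)) :=
    ENNReal.tendsto_ofReal (tendsto_const_nhds.sub tendsto_id).abs
  simpa [Real.volume_uIoc] using h

namespace Example316

theorem coeFn_f (t : ℝ) : ⇑(f t) =ᵐ[μ01] (Ioc t 1).indicator (fun _ => (1:ℝ)) :=
  AEEqFun.coeFn_mk _ _

theorem tendsto_slope_f_zero (t : ℝ) :
    Tendsto (fun s : ℝ => ((s - t)⁻¹ : ℝ) • (f s - f t)) (𝓝 t)
      (@nhds (ℝ →ₘ[μ01] ℝ) (elTop (l0abs (K := ℝ))) 0) := by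
  refine tendsto_elTop_l0abs_zero_of_ae_eq_zero_off (D := fun s => Ι s t)
    (tendsto_of_tendsto_of_tendsto_of_le_of_le tendsto_const_nhds (Real.tendsto_volume_uIoc t)
      (fun _ => zero_le) fun s => Measure.restrict_le_self _) fun s => ?_
  filter_upwards [AEEqFun.coeFn_smul ((s - t)⁻¹ : ℝ) (f s - f t), AEEqFun.coeFn_sub (f s) (f t),
    coeFn_f s, coeFn_f t] with ω hsmul hsub hs ht hω
  simp [hsmul, hsub, hs, ht, indicator_Ioc_eq_of_notMem_uIoc _ hω]

theorem ae_mem_Ioc_zero_one : ∀ᵐ ω ∂μ01, ω ∈ Ioc (0:ℝ) 1 := by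
  rw [μ01, Measure.restrict_congr_set Ioc_ae_eq_Icc.symm]
  exact ae_restrict_mem measurableSet_Ioc

theorem f_one_sub_f_zero : f 1 - f 0 = AEEqFun.const ℝ (-1 : ℝ) := by
  refine AEEqFun.ext ?_
  filter_upwards [AEEqFun.coeFn_sub (f 1) (f 0), coeFn_f 1, coeFn_f 0,
    AEEqFun.coeFn_const ℝ (-1 : ℝ), ae_mem_Ioc_zero_one] with ω hsub h1 h0 hconst hω
  simp [hsub, h1, h0, hconst, hω]

/-- The map `f : [0,1] → L⁰(𝔅[0,1],ℝ)`, `f(t) = [I_{(t,1]}]`, is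
differentiable in the `(ε,λ)`-topology with `f'(t) = 0` for all `t ∈ [0,1]`, yet
`f(1) - f(0) = -1 ≠ 0 = ∫₀¹ f'(t) dt`; so the fundamental theorem of calculus fails for
this non-`L⁰`-Lipschitz function. -/
theorem ftc_fails_for_indicator_family :
    (∀ t ∈ Icc (0:ℝ) 1,
      Tendsto (fun s : ℝ => ((s - t)⁻¹ : ℝ) • (f s - f t))
        (nhdsWithin t (Icc (0:ℝ) 1 \ {t}))
        (@nhds (ℝ →ₘ[μ01] ℝ) (elTop (l0abs (K := ℝ))) 0)) ∧
    f 1 - f 0 = AEEqFun.const ℝ (-1 : ℝ) ∧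
    f 1 - f 0 ≠ 0 := by
  refine ⟨fun t _ => (tendsto_slope_f_zero t).mono_left nhdsWithin_le_nhds, f_one_sub_f_zero, ?_⟩
  rw [f_one_sub_f_zero]
  exact AEEqFun.const_ne_zero (by norm_num)

end Example316
end
end
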